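/- Let (X,S) be a non-degenerate, involutive and braided set-theoretical solution on a finite set X with n elements, and let M be its structure monoid. Since all defining relations of M are length-preserving, there is a unique monoid homomorphism ℓ : M → ℕ with ℓ(x) = 1 for every x ∈ X. If Δ ∈ M is a right lcm of the elements of X, then ℓ(Δ) = n. -/

import Mathlib

namespace YBE

/-- `(X,S)` is non-degenerate: all the maps `g_x = y ↦ S(x,y).1` and
`f_y = x ↦ S(x,y).2` are bijective. -/
def Nondegenerate {X : Type*} (S : X × X → X × X) : Prop :=
  (∀ x : X, Function.Bijective fun y => (S (x, y)).1) ∧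
  (∀ y : X, Function.Bijective fun x => (S (x, y)).2)

/-- `(X,S)` is involutive: `S ∘ S = id`. -/
def InvolutiveSol {X : Type*} (S : X × X → X × X) : Prop := S ∘ S = id

/-- `S¹² = S × id` on `X × X × X`. -/
def S12 {X : Type*} (S : X × X → X × X) : X × X × X → X × X × X :=
  fun p => ((S (p.1, p.2.1)).1, (S (p.1, p.2.1)).2, p.2.2)

/-- `S²³ = id × S` on `X × X × X`. -/
def S23 {X : Type*} (S : X × X → X × X) : X × X × X → X × X × X :=
  fun p => (p.1, S (p.2.1, p.2.2))

/-- `(X,S)` is braided: `S¹² ∘ S²³ ∘ S¹² = S²³ ∘ S¹² ∘ S²³`. -/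
def BraidedSol {X : Type*} (S : X × X → X × X) : Prop :=
  S12 S ∘ S23 S ∘ S12 S = S23 S ∘ S12 S ∘ S23 S

/-- The map `g_x : y ↦ S(x,y).1`. -/
def gmap {X : Type*} (S : X × X → X × X) (x : X) : X → X := fun y => (S (x, y)).1

/-- The map `f_y : x ↦ S(x,y).2`. -/
def fmap {X : Type*} (S : X × X → X × X) (y : X) : X → X := fun x => (S (x, y)).2

/-- The inverse `g_x⁻¹` of the (bijective) map `g_x`. -/
noncomputable def ginv {X : Type*} [Nonempty X] (S : X × X → X × X) (x : X) : X → X :=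
  Function.invFun (gmap S x)

/-- The inverse `f_y⁻¹` of the (bijective) map `f_y`. -/
noncomputable def finv {X : Type*} [Nonempty X] (S : X × X → X × X) (y : X) : X → X :=
  Function.invFun (fmap S y)

/-- The defining relations of the structure monoid: `x·y = t·z` whenever `S(x,y) = (t,z)`. -/
def ybRel {X : Type*} (S : X × X → X × X) : FreeMonoid X → FreeMonoid X → Prop :=
  fun a b => ∃ x y : X, a = FreeMonoid.of x * FreeMonoid.of y ∧
    b = FreeMonoid.of (S (x, y)).1 * FreeMonoid.of (S (x, y)).2

/-- The structure monoid of `(X,S)`: the monoid presented by generating set `X` and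
relations `x·y = t·z` for each `x,y,t,z` with `S(x,y) = (t,z)`. -/
abbrev StructureMonoid {X : Type*} (S : X × X → X × X) : Type _ :=
  (conGen (ybRel S)).Quotient

/-- The image in the structure monoid of a generator `x ∈ X`. -/
def smi {X : Type*} (S : X × X → X × X) (x : X) : StructureMonoid S :=
  (conGen (ybRel S)).mk' (FreeMonoid.of x)

/-- The defining relations of the structure group, as elements of the free group. -/
def ybGRels {X : Type*} (S : X × X → X × X) : Set (FreeGroup X) :=
  {w | ∃ x y : X, w = FreeGroup.of x * FreeGroup.of y *
    (FreeGroup.of (S (x, y)).1 * FreeGroup.of (S (x, y)).2)⁻¹}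

/-- The structure group of `(X,S)`: the group presented by generating set `X` and
relations `x·y = t·z` for each `x,y,t,z` with `S(x,y) = (t,z)`. -/
abbrev StructureGroup {X : Type*} (S : X × X → X × X) : Type _ :=
  PresentedGroup (ybGRels S)

/-- `a` left-divides `b`. -/
def LDvd {M : Type*} [Monoid M] (a b : M) : Prop := ∃ c, b = a * c

/-- `m` is a right lcm of the family `a`: each `a i` left-divides `m`, and `m`
left-divides every common right multiple of the `a i`. -/
def IsRightLcm {M : Type*} [Monoid M] {ι : Sort*} (a : ι → M) (m : M) : Prop :=
  (∀ i, LDvd (a i) m) ∧ ∀ w, (∀ i, LDvd (a i) w) → LDvd m w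

/-!
By involutivity and the braid relation, `x ↦ ({x}, g_x)` extends to a homomorphism `Φ` from the
structure monoid to the semidirect product `Multiset X ⋊ (X → X)`, and `ℓ` is the cardinality of
the multiset component. A generator `x` occurs in the multiset of `Φ m` exactly when `x`
left-divides `m`: `x·y = g_x(y)·f_y(x)` moves any generator that shows up to the front. So a right
lcm `Δ` contains every generator, whence `ℓ Δ ≥ n`. Conversely, since the `g_x` are bijective,
some `w` has multiset exactly `X`; every generator divides `w`, so `Δ` divides `w` and
`ℓ Δ ≤ ℓ w = n`.
-/

@[ext] structure MultisetSemidirect (X : Type*) where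
  mset : Multiset X
  act : X → X

namespace MultisetSemidirect

variable {X : Type*}

instance : Mul (MultisetSemidirect X) := ⟨fun a b => ⟨a.mset + b.mset.map a.act, a.act ∘ b.act⟩⟩

instance : One (MultisetSemidirect X) := ⟨⟨0, id⟩⟩

@[simp] lemma mset_mul (a b : MultisetSemidirect X) : (a * b).mset = a.mset + b.mset.map a.act :=
  rfl

@[simp] lemma act_mul (a b : MultisetSemidirect X) : (a * b).act = a.act ∘ b.act := rfl

@[simp] lemma mset_one : (1 : MultisetSemidirect X).mset = 0 := rfl

@[simp] lemma act_one : (1 : MultisetSemidirect X).act = id := rfl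

instance : Monoid (MultisetSemidirect X) where
  mul_assoc a b c := by ext1 <;> simp [Multiset.map_map, add_assoc, Function.comp_assoc]
  one_mul a := by ext1 <;> simp
  mul_one a := by ext1 <;> simp

def card : MultisetSemidirect X →* Multiplicative ℕ where
  toFun a := Multiplicative.ofAdd (Multiset.card a.mset)
  map_one' := by simp
  map_mul' a b := by simp [← ofAdd_add]

end MultisetSemidirect

open MultisetSemidirect

section Solution

variable {X : Type*} {S : X × X → X × X}

lemma InvolutiveSol.apply_apply (hinv : InvolutiveSol S) (p : X × X) : S (S p) = p :=
  congrFun hinv p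

lemma BraidedSol.gmap_comp_gmap (hbr : BraidedSol S) (x y : X) :
    gmap S (S (x, y)).1 ∘ gmap S (S (x, y)).2 = gmap S x ∘ gmap S y :=
  funext fun z => by simpa [S12, S23, gmap] using congrArg Prod.fst (congrFun hbr (x, y, z))

lemma smi_mul_smi (x y : X) :
    smi S x * smi S y = smi S (S (x, y)).1 * smi S (S (x, y)).2 :=
  (Con.eq _).mpr (ConGen.Rel.of _ _ ⟨x, y, rfl, rfl⟩)

lemma StructureMonoid.hom_ext {N : Type*} [Monoid N] {φ ψ : StructureMonoid S →* N}
    (h : ∀ x, φ (smi S x) = ψ (smi S x)) : φ = ψ :=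
  Con.hom_ext (FreeMonoid.hom_eq h)

@[elab_as_elim]
lemma StructureMonoid.induction_on {p : StructureMonoid S → Prop} (m : StructureMonoid S)
    (one : p 1) (smi_mul : ∀ x m, p m → p (smi S x * m)) : p m := by
  obtain ⟨w, rfl⟩ := Con.mk'_surjective m
  induction w using FreeMonoid.inductionOn' with
  | one => exact one
  | of_mul x w ih => rw [map_mul]; exact smi_mul x _ ih

def toSemidirect (hinv : InvolutiveSol S) (hbr : BraidedSol S) :
    StructureMonoid S →* MultisetSemidirect X :=
  Con.lift _ (FreeMonoid.lift fun x => ⟨{x}, gmap S x⟩) <| Con.conGen_le.mpr <| by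
    rintro _ _ ⟨x, y, rfl, rfl⟩
    refine (Con.ker_rel _).mpr (MultisetSemidirect.ext ?_ ?_)
    · simpa [gmap, hinv.apply_apply] using Multiset.pair_comm x (S (x, y)).1
    · exact (hbr.gmap_comp_gmap x y).symm

variable (hinv : InvolutiveSol S) (hbr : BraidedSol S)

@[simp] lemma toSemidirect_smi (x : X) :
    toSemidirect hinv hbr (smi S x) = ⟨{x}, gmap S x⟩ :=
  Con.lift_mk' _ _

lemma mem_toSemidirect_of_ldvd {x : X} {m : StructureMonoid S} (h : LDvd (smi S x) m) :
    x ∈ (toSemidirect hinv hbr m).mset := by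
  obtain ⟨c, rfl⟩ := h
  simp

lemma ldvd_of_mem_toSemidirect {x : X} {m : StructureMonoid S}
    (h : x ∈ (toSemidirect hinv hbr m).mset) : LDvd (smi S x) m := by
  induction m using StructureMonoid.induction_on generalizing x with
  | one => simp at h
  | smi_mul a m ih =>
    simp only [map_mul, mset_mul, toSemidirect_smi, Multiset.singleton_add, Multiset.mem_cons,
      Multiset.mem_map] at h
    obtain rfl | ⟨y, hy, rfl⟩ := h
    · exact ⟨m, rfl⟩
    · obtain ⟨c, rfl⟩ := ih hy
      exact ⟨smi S (S (a, y)).2 * c, by rw [← mul_assoc, smi_mul_smi, mul_assoc]; rfl⟩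

lemma exists_map_toSemidirect_eq (hg : ∀ x, Function.Bijective (gmap S x)) (s : Multiset X) :
    ∀ h : Equiv.Perm X, ∃ m, (toSemidirect hinv hbr m).mset.map h = s := by
  induction s using Multiset.induction_on with
  | empty => exact fun _ => ⟨1, by simp⟩
  | cons v s ih =>
    intro h
    set a := h.symm v
    obtain ⟨m, hm⟩ := ih (h * Equiv.ofBijective _ (hg a))
    refine ⟨smi S a * m, ?_⟩
    simpa [Multiset.map_map, a] using hm

lemma exists_toSemidirect_eq (hg : ∀ x, Function.Bijective (gmap S x)) (s : Multiset X) :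
    ∃ m, (toSemidirect hinv hbr m).mset = s := by
  simpa using exists_map_toSemidirect_eq hinv hbr hg s 1

def lengthHom : StructureMonoid S →* Multiplicative ℕ := card.comp (toSemidirect hinv hbr)

lemma lengthHom_apply (m : StructureMonoid S) :
    lengthHom hinv hbr m = Multiplicative.ofAdd (Multiset.card (toSemidirect hinv hbr m).mset) :=
  rfl

lemma lengthHom_smi (x : X) : lengthHom hinv hbr (smi S x) = Multiplicative.ofAdd 1 := by
  simp [lengthHom_apply]

lemma lengthHom_eq_card_of_isRightLcm [Finite X] (hg : ∀ x, Function.Bijective (gmap S x))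
    {Δ : StructureMonoid S} (hΔ : IsRightLcm (fun x : X => smi S x) Δ) :
    lengthHom hinv hbr Δ = Multiplicative.ofAdd (Nat.card X) := by
  have : Fintype X := Fintype.ofFinite X
  obtain ⟨w, hw⟩ := exists_toSemidirect_eq hinv hbr hg Finset.univ.val
  have hΔw : LDvd Δ w := hΔ.2 w fun x => ldvd_of_mem_toSemidirect hinv hbr (by simp [hw])
  have huniv : Finset.univ.val ≤ (toSemidirect hinv hbr Δ).mset :=
    (Multiset.le_iff_subset Finset.univ.nodup).mpr fun x _ =>
      mem_toSemidirect_of_ldvd hinv hbr (hΔ.1 x)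
  obtain ⟨c, rfl⟩ := hΔw
  have hcard := congrArg Multiset.card hw
  have hcard_le := Multiset.card_le_card huniv
  simp only [map_mul, mset_mul, Multiset.card_add, Multiset.card_map, Finset.card_val,
    Finset.card_univ] at hcard hcard_le
  rw [lengthHom_apply, Nat.card_eq_fintype_card]
  congr 1
  omega

end Solution

/-- There is a unique length homomorphism `ℓ` on the structure monoid with `ℓ(x) = 1` for
every generator `x`, and `ℓ(Δ) = |X|` for any right lcm `Δ` of the generators. -/
theorem stmt8 {X : Type*} [Finite X] (S : X × X → X × X)
    (hnd : Nondegenerate S) (hinv : InvolutiveSol S) (hbr : BraidedSol S) :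
    (∃! ℓ : StructureMonoid S →* Multiplicative ℕ,
      ∀ x : X, ℓ (smi S x) = Multiplicative.ofAdd 1) ∧
    (∀ ℓ : StructureMonoid S →* Multiplicative ℕ,
      (∀ x : X, ℓ (smi S x) = Multiplicative.ofAdd 1) →
      ∀ Δ : StructureMonoid S, IsRightLcm (fun x : X => smi S x) Δ →
        ℓ Δ = Multiplicative.ofAdd (Nat.card X)) := by
  have hℓ : ∀ ℓ : StructureMonoid S →* Multiplicative ℕ,
      (∀ x : X, ℓ (smi S x) = Multiplicative.ofAdd 1) → ℓ = lengthHom hinv hbr := fun ℓ hℓ =>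
    StructureMonoid.hom_ext fun x => (hℓ x).trans (lengthHom_smi hinv hbr x).symm
  refine ⟨⟨lengthHom hinv hbr, lengthHom_smi hinv hbr, hℓ⟩, fun ℓ hℓx Δ hΔ => ?_⟩
  rw [hℓ ℓ hℓx]
  exact lengthHom_eq_card_of_isRightLcm hinv hbr hnd.1 hΔ
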